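/- Fix K ≥ 1 and a threshold γ ∈ ℝ. The acceptance region of Pearson's statistic, namely the set { (z₁, …, z_K) ∈ ℝ^K : −∑_{k=1}^K log(1 − Φ(z_k)) < γ and −∑_{k=1}^K log Φ(z_k) < γ }, is a convex subset of ℝ^K. -/

import Mathlib

/-- The standard normal density φ(t) = (1/√(2π))·exp(−t²/2). -/
noncomputable def stdNormalPDF (t : ℝ) : ℝ :=
  (Real.sqrt (2 * Real.pi))⁻¹ * Real.exp (-t ^ 2 / 2)

/-- The standard normal cumulative distribution function Φ(t) = ∫_{−∞}^t φ(s) ds. -/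
noncomputable def stdNormalCDF (t : ℝ) : ℝ :=
  ∫ s in Set.Iic t, stdNormalPDF s

/-!
Both constraints are strict sublevel sets of functions `z ↦ ∑ k, g (z k)` with `g` convex, so
their intersection is convex. For `g = -log Φ` one computes
`(-log Φ)'' = φ (φ + t Φ) / Φ²`, and `φ t + t Φ t ≥ 0`: this is clear for `t ≥ 0`, and for
`t < 0` it follows from `φ' = -t φ`, which gives `-φ t = ∫_{s ≤ t} s φ s ≤ t Φ t`.
The other constraint reduces to the first through the symmetry `1 - Φ t = Φ (-t)`.
-/

open MeasureTheory Set Real Filter ProbabilityTheory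

lemma stdNormalPDF_eq_gaussianPDFReal : stdNormalPDF = gaussianPDFReal 0 1 := by
  ext t
  simp [stdNormalPDF, gaussianPDFReal]

lemma stdNormalPDF_pos (t : ℝ) : 0 < stdNormalPDF t :=
  stdNormalPDF_eq_gaussianPDFReal ▸ gaussianPDFReal_pos 0 1 t one_ne_zero

lemma integrable_stdNormalPDF : Integrable stdNormalPDF :=
  stdNormalPDF_eq_gaussianPDFReal ▸ integrable_gaussianPDFReal 0 1

lemma integral_stdNormalPDF : ∫ t, stdNormalPDF t = 1 :=
  stdNormalPDF_eq_gaussianPDFReal ▸ integral_gaussianPDFReal_eq_one 0 one_ne_zero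

lemma stdNormalPDF_neg (t : ℝ) : stdNormalPDF (-t) = stdNormalPDF t := by
  simp only [stdNormalPDF, neg_sq]

lemma hasDerivAt_stdNormalPDF (t : ℝ) : HasDerivAt stdNormalPDF (-t * stdNormalPDF t) t := by
  have h : HasDerivAt (fun s : ℝ => -s ^ 2 / 2) (-t) t := by
    simpa [neg_div] using ((hasDerivAt_pow 2 t).neg).div_const 2
  rw [show -t * stdNormalPDF t = (√(2 * π))⁻¹ * (rexp (-t ^ 2 / 2) * -t) by
    simp only [stdNormalPDF]; ring]
  exact h.exp.const_mul _

lemma integrable_mul_stdNormalPDF : Integrable fun t => t * stdNormalPDF t := by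
  refine ((integrable_mul_exp_neg_mul_sq one_half_pos).const_mul (√(2 * π))⁻¹).congr
    (Eventually.of_forall fun t => ?_)
  simp only [stdNormalPDF]; ring_nf

lemma setIntegral_Iic_mul_stdNormalPDF (t : ℝ) :
    ∫ s in Iic t, s * stdNormalPDF s = -stdNormalPDF t := by
  have hderiv : ∀ s, HasDerivAt (-stdNormalPDF) (s * stdNormalPDF s) s := fun s => by
    simpa using (hasDerivAt_stdNormalPDF s).neg
  have hlim : Tendsto (-stdNormalPDF) atBot (nhds 0) :=
    tendsto_zero_of_hasDerivAt_of_integrableOn_Iic (a := 0) (fun s _ => hderiv s)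
      integrable_mul_stdNormalPDF.integrableOn integrable_stdNormalPDF.neg.integrableOn
  rw [integral_Iic_of_hasDerivAt_of_tendsto' (fun s _ => hderiv s)
    integrable_mul_stdNormalPDF.integrableOn hlim, sub_zero, Pi.neg_apply]

lemma hasDerivAt_stdNormalCDF (t : ℝ) : HasDerivAt stdNormalCDF (stdNormalPDF t) t := by
  have hcont : Continuous stdNormalPDF := by unfold stdNormalPDF; fun_prop
  have hint (a : ℝ) : IntegrableOn stdNormalPDF (Iic a) := integrable_stdNormalPDF.integrableOn
  refine ((intervalIntegral.integral_hasDerivAt_right (a := 0)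
    integrable_stdNormalPDF.intervalIntegrable
    hcont.aestronglyMeasurable.stronglyMeasurableAtFilter hcont.continuousAt).const_add
    (stdNormalCDF 0)).congr_of_eventuallyEq (Eventually.of_forall fun s => ?_)
  dsimp only
  rw [← intervalIntegral.integral_Iic_sub_Iic (hint 0) (hint s)]
  simp only [stdNormalCDF, add_sub_cancel]

lemma stdNormalCDF_pos (t : ℝ) : 0 < stdNormalCDF t := by
  rw [stdNormalCDF, setIntegral_pos_iff_support_of_nonneg_ae
    (ae_of_all _ fun s => (stdNormalPDF_pos s).le) integrable_stdNormalPDF.integrableOn,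
    Function.support_eq_univ fun s => (stdNormalPDF_pos s).ne', univ_inter]
  simp

lemma one_sub_stdNormalCDF (t : ℝ) : 1 - stdNormalCDF t = stdNormalCDF (-t) := by
  rw [← integral_stdNormalPDF, ← intervalIntegral.integral_Iic_add_Ioi
    integrable_stdNormalPDF.integrableOn integrable_stdNormalPDF.integrableOn (b := t),
    stdNormalCDF, stdNormalCDF, ← integral_comp_neg_Ioi]
  simp only [stdNormalPDF_neg, add_sub_cancel_left]

lemma stdNormalPDF_add_mul_stdNormalCDF_nonneg (t : ℝ) :
    0 ≤ stdNormalPDF t + t * stdNormalCDF t := by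
  rcases le_or_gt 0 t with ht | ht
  · have := stdNormalPDF_pos t
    have := stdNormalCDF_pos t
    positivity
  · suffices t * stdNormalCDF t ≥ -stdNormalPDF t by linarith
    rw [← setIntegral_Iic_mul_stdNormalPDF, stdNormalCDF, ← integral_const_mul]
    refine setIntegral_mono_on integrable_mul_stdNormalPDF.integrableOn
      (integrable_stdNormalPDF.const_mul t).integrableOn measurableSet_Iic fun s hs => ?_
    exact mul_le_mul_of_nonneg_right hs (stdNormalPDF_pos s).le

lemma convexOn_neg_log_stdNormalCDF : ConvexOn ℝ univ fun t => -log (stdNormalCDF t) := by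
  have hf' (t : ℝ) : HasDerivAt (fun t => -log (stdNormalCDF t))
      (-(stdNormalPDF t / stdNormalCDF t)) t :=
    ((hasDerivAt_stdNormalCDF t).log (stdNormalCDF_pos t).ne').neg
  have hf'' (t : ℝ) : HasDerivAt (fun t => -(stdNormalPDF t / stdNormalCDF t))
      (stdNormalPDF t * (stdNormalPDF t + t * stdNormalCDF t) / stdNormalCDF t ^ 2) t := by
    have := ((hasDerivAt_stdNormalPDF t).div (hasDerivAt_stdNormalCDF t)
      (stdNormalCDF_pos t).ne').neg
    rwa [show -((-t * stdNormalPDF t * stdNormalCDF t - stdNormalPDF t * stdNormalPDF t) /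
      stdNormalCDF t ^ 2) = stdNormalPDF t * (stdNormalPDF t + t * stdNormalCDF t) /
      stdNormalCDF t ^ 2 by ring] at this
  refine convexOn_of_hasDerivWithinAt2_nonneg convex_univ
    (continuous_iff_continuousAt.2 fun t => (hf' t).continuousAt).continuousOn
    (fun t _ => (hf' t).hasDerivWithinAt) (fun t _ => (hf'' t).hasDerivWithinAt) fun t _ => ?_
  have := stdNormalPDF_pos t
  have := stdNormalPDF_add_mul_stdNormalCDF_nonneg t
  positivity

lemma convexOn_neg_log_one_sub_stdNormalCDF :
    ConvexOn ℝ univ fun t => -log (1 - stdNormalCDF t) := by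
  have := convexOn_neg_log_stdNormalCDF.comp_linearMap (-LinearMap.id)
  simpa [Function.comp_def, one_sub_stdNormalCDF] using this

lemma ConvexOn.sum_apply {𝕜 E β ι : Type*} [Fintype ι] [Semiring 𝕜] [PartialOrder 𝕜]
    [AddCommMonoid E] [Module 𝕜 E] [AddCommMonoid β] [PartialOrder β] [IsOrderedAddMonoid β]
    [Module 𝕜 β] {f : E → β} (hf : ConvexOn 𝕜 univ f) :
    ConvexOn 𝕜 univ fun z : ι → E => ∑ i, f (z i) := by
  have h (i : ι) : ConvexOn 𝕜 univ fun z : ι → E => f (z i) :=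
    hf.comp_linearMap (LinearMap.proj (R := 𝕜) (φ := fun _ : ι => E) i)
  simpa only [Finset.sum_fn] using
    Finset.sum_induction (fun i (z : ι → E) => f (z i)) (ConvexOn 𝕜 univ)
      (fun _ _ => ConvexOn.add) (convexOn_const (𝕜 := 𝕜) (E := ι → E) (0 : β) convex_univ)
      fun i _ => h i

theorem stmt_9_general (K : ℕ) (γ : ℝ) :
    Convex ℝ
      {z : Fin K → ℝ |
        -∑ k, Real.log (1 - stdNormalCDF (z k)) < γ ∧
        -∑ k, Real.log (stdNormalCDF (z k)) < γ} := by
  have hset : {z : Fin K → ℝ |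
        -∑ k, Real.log (1 - stdNormalCDF (z k)) < γ ∧
        -∑ k, Real.log (stdNormalCDF (z k)) < γ} =
      {z ∈ univ | ∑ k, -log (1 - stdNormalCDF (z k)) < γ} ∩
        {z ∈ univ | ∑ k, -log (stdNormalCDF (z k)) < γ} := by
    ext z
    simp [Finset.sum_neg_distrib]
  rw [hset]
  exact (convexOn_neg_log_one_sub_stdNormalCDF.sum_apply.convex_lt γ).inter
    (convexOn_neg_log_stdNormalCDF.sum_apply.convex_lt γ)

/-- For K ≥ 1 and γ ∈ ℝ, the acceptance region of Pearson's statistic,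
{ z ∈ ℝ^K : −∑_k log(1 − Φ(z_k)) < γ and −∑_k log Φ(z_k) < γ }, is a convex
subset of ℝ^K. -/
theorem stmt_9 (K : ℕ) (hK : 1 ≤ K) (γ : ℝ) :
    Convex ℝ
      {z : Fin K → ℝ |
        -∑ k, Real.log (1 - stdNormalCDF (z k)) < γ ∧
        -∑ k, Real.log (stdNormalCDF (z k)) < γ} :=
  stmt_9_general K γ
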